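/- Let M = (Q, s, Δ) be a finite automaton over the binary alphabet and suppose B ⊆ Q is strongly accessible. If x ∈ {0,1}^ω is such that V_B(x) is weakly sparse, then there exists a state q ∈ Q_inf(x) such that x^{(q)} is weakly sparse or co-weakly sparse. -/

import Mathlib

/-- `cars x t` is `N_t(x) = x_1 + ⋯ + x_t` (sequences are 0-indexed: `x i` is `x_{i+1}`). -/
def cars (x : ℕ → Bool) (t : ℕ) : ℕ :=
  ((Finset.range t).filter (fun i => x i = true)).card

/-- `x` is weakly sparse if `lim_{s→∞} inf_{t ≥ s} N_t(x)/t = 0`. -/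
def weaklySparse (x : ℕ → Bool) : Prop :=
  Filter.liminf (fun t : ℕ => (cars x t : ℝ) / t) Filter.atTop = 0

/-- The state of the automaton with transition function `Δ` and start state `s`
after reading `t` bits of `x`: `q_0(x) = s`, `q_{t+1}(x) = Δ(q_t(x), x_{t+1})`. -/
def autoRun {Q : Type*} (Δ : Q → Bool → Q) (s : Q) (x : ℕ → Bool) : ℕ → Q
  | 0 => s
  | t + 1 => Δ (autoRun Δ s x t) (x t)

/-- The subsequence `x^{(q)}` of `x` recording, for each visit of the automaton to state
`q`, the bit read immediately after that visit: if `V_q(x) = {t(1) < t(2) < ⋯}` then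
`x^{(q)}_i = x_{t(i)+1}` (in 0-indexed form, `x^{(q)} i = x (t(i+1))`, using `Nat.nth` to
enumerate `V_q(x)`). -/
noncomputable def subseqAt {Q : Type*} (Δ : Q → Bool → Q) (s : Q) (x : ℕ → Bool)
    (q : Q) : ℕ → Bool :=
  fun i => x (Nat.nth (fun t => autoRun Δ s x t = q) i)


/-!
If the claim fails, then at every state visited infinitely often both bits are read after a
positive fraction of the visits (and states visited finitely often are harmless), so there are
`δ > 0` and `C` with `readCount q b t ≥ δ · visitCount q t - C` for all `q`, `b`, `t`. Iterating,
following a word `w` from `q` visits `w(q)` at least `δ^|w| · visitCount q t - |w| C` times.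
Before time `t` some state is visited at least `t / |Q|` times; it is reachable, so a word of
bounded length `L` leads it into `B`. Hence `V_B(x)` has lower density at least `δ^L / |Q| > 0`,
and is not weakly sparse.
-/

open Filter Topology

lemma cars_eq_count (y : ℕ → Bool) (m : ℕ) : cars y m = Nat.count (fun i => y i = true) m :=
  (Nat.count_eq_card_filter_range _ m).symm

lemma cars_mono (y : ℕ → Bool) : Monotone (cars y) := by
  simpa only [Monotone, cars_eq_count] using Nat.count_monotone _

lemma cars_div_mem_Icc (y : ℕ → Bool) (m : ℕ) : (cars y m : ℝ) / m ∈ Set.Icc 0 1 := by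
  rw [cars_eq_count]
  exact ⟨by positivity,
    div_le_one_of_le₀ (by exact_mod_cast Nat.count_le _) (Nat.cast_nonneg m)⟩

theorem not_weaklySparse_iff {y : ℕ → Bool} :
    ¬ weaklySparse y ↔ ∃ δ > 0, ∃ C : ℝ, ∀ᶠ m in atTop, δ * m - C ≤ cars y m := by
  set u : ℕ → ℝ := fun m => (cars y m : ℝ) / m
  have hbdd : IsBoundedUnder (· ≥ ·) atTop u :=
    isBoundedUnder_of ⟨0, fun m => (cars_div_mem_Icc y m).1⟩
  have hcobdd : IsCoboundedUnder (· ≥ ·) atTop u :=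
    (isBoundedUnder_of ⟨1, fun m => (cars_div_mem_Icc y m).2⟩).isCoboundedUnder_ge
  have hnonneg : 0 ≤ liminf u atTop :=
    le_liminf_of_le hcobdd (Eventually.of_forall fun m => (cars_div_mem_Icc y m).1)
  constructor
  · intro h
    have hpos : 0 < liminf u atTop := hnonneg.lt_of_ne' h
    refine ⟨liminf u atTop / 2, by positivity, 0, ?_⟩
    filter_upwards [eventually_lt_of_lt_liminf (half_lt_self hpos) hbdd,
      eventually_gt_atTop 0] with m hm hm0
    rw [sub_zero, ← le_div_iff₀ (by exact_mod_cast hm0)]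
    exact hm.le
  · rintro ⟨δ, hδ, C, hC⟩ h
    have : δ / 2 ≤ liminf u atTop := by
      refine le_liminf_of_le hcobdd ?_
      filter_upwards [hC, eventually_gt_atTop 0,
        tendsto_natCast_atTop_atTop.eventually_ge_atTop (2 * C / δ)] with m hm hm0 hmC
      rw [le_div_iff₀ (by exact_mod_cast hm0)]
      rw [div_le_iff₀' hδ] at hmC
      linarith
    linarith [h ▸ this]

lemma exists_forall_affine_le_of_eventually {f : ℕ → ℝ} (hf : 0 ≤ f) {δ C : ℝ}
    (hδ : 0 ≤ δ) (h : ∀ᶠ m in atTop, δ * m - C ≤ f m) : ∃ C', ∀ m, δ * m - C' ≤ f m := by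
  obtain ⟨M, hM⟩ := eventually_atTop.1 h
  refine ⟨max C (δ * M), fun m => ?_⟩
  rcases le_total M m with hm | hm
  · linarith [hM m hm, le_max_left C (δ * M)]
  · have : δ * m ≤ δ * M := mul_le_mul_of_nonneg_left (by exact_mod_cast hm) hδ
    linarith [show (0 : ℝ) ≤ f m from hf m, le_max_right C (δ * M)]

lemma exists_uniform_affine_lower_bound {ι α : Type*} [Finite ι] {f g : ι → α → ℝ}
    (hf : 0 ≤ f) (h : ∀ i, ∃ δ > 0, ∃ C, ∀ a, δ * f i a - C ≤ g i a) :
    ∃ δ > 0, δ ≤ 1 ∧ ∃ C ≥ 0, ∀ i a, δ * f i a - C ≤ g i a := by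
  -- a bound survives shrinking `δ` and enlarging `C`, so it holds eventually along
  -- `𝓝[>] 0 ×ˢ atTop`, and finitely many such events can be met at once
  have hev : ∀ i, ∀ᶠ p : ℝ × ℝ in 𝓝[>] 0 ×ˢ atTop, ∀ a, p.1 * f i a - p.2 ≤ g i a := by
    intro i
    obtain ⟨δ, hδ, C, hC⟩ := h i
    filter_upwards [Eventually.prod_mk (Ioc_mem_nhdsGT hδ) (eventually_ge_atTop C)] with p hp a
    linarith [hC a, mul_le_mul_of_nonneg_right hp.1.2 (hf i a)]
  obtain ⟨⟨δ, C⟩, hall, ⟨hδ0, hδ1⟩, hC⟩ :=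
    ((eventually_all.2 hev).and
      (Eventually.prod_mk (Ioc_mem_nhdsGT one_pos) (eventually_ge_atTop 0))).exists
  exact ⟨δ, hδ0, hδ1, C, hC, hall⟩

lemma exists_uniform_length_bound {ι α : Type*} [Finite ι] {R : ι → Prop}
    {P : ι → List α → Prop} (h : ∀ i, R i → ∃ l, P i l) :
    ∃ L, ∀ i, R i → ∃ l, l.length ≤ L ∧ P i l := by
  have hev : ∀ i, ∀ᶠ L in atTop, R i → ∃ l, l.length ≤ L ∧ P i l := by
    intro i
    by_cases hi : R i
    · obtain ⟨l, hl⟩ := h i hi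
      filter_upwards [eventually_ge_atTop l.length] with L hL _ using ⟨l, hL, hl⟩
    · exact Eventually.of_forall fun _ hi' => absurd hi' hi
  exact (eventually_all.2 hev).exists

theorem Nat.count_comp_nth_count (p r : ℕ → Prop) [DecidablePred p] [DecidablePred r]
    (t : ℕ) :
    Nat.count (fun i => r (Nat.nth p i)) (Nat.count p t) = Nat.count (fun i => p i ∧ r i) t := by
  induction t with
  | zero => simp
  | succ t ih =>
    by_cases hp : p t
    · rw [Nat.count_succ p, if_pos hp, Nat.count_succ, ih, Nat.nth_count hp, Nat.count_succ]
      simp [hp]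
    · rw [Nat.count_succ p, if_neg hp, add_zero, ih, Nat.count_succ]
      simp [hp]

lemma autoRun_eq_foldl {Q : Type*} (Δ : Q → Bool → Q) (s : Q) (x : ℕ → Bool) (t : ℕ) :
    autoRun Δ s x t = ((List.range t).map x).foldl Δ s := by
  induction t with
  | zero => rfl
  | succ t ih => rw [List.range_succ, List.map_append, List.foldl_append, ← ih]; rfl

section visitCount

variable {Q : Type*} [DecidableEq Q] (Δ : Q → Bool → Q) (s : Q) (x : ℕ → Bool)

def visitCount (q : Q) (t : ℕ) : ℕ :=
  Nat.count (fun i => autoRun Δ s x i = q) t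

def readCount (q : Q) (b : Bool) (t : ℕ) : ℕ :=
  Nat.count (fun i => autoRun Δ s x i = q ∧ x i = b) t

lemma cars_subseqAt (q : Q) (t : ℕ) :
    cars (subseqAt Δ s x q) (visitCount Δ s x q t) = readCount Δ s x q true t := by
  rw [cars_eq_count]
  exact Nat.count_comp_nth_count (fun i => autoRun Δ s x i = q) (fun i => x i = true) t

lemma cars_not_subseqAt (q : Q) (t : ℕ) :
    cars (fun i => !subseqAt Δ s x q i) (visitCount Δ s x q t) = readCount Δ s x q false t := by
  rw [cars_eq_count, visitCount, readCount]
  convert Nat.count_comp_nth_count (fun i => autoRun Δ s x i = q) (fun i => x i = false) t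
    using 2
  ext i
  simp [subseqAt]

lemma readCount_le_visitCount_succ (q : Q) (b : Bool) (t : ℕ) :
    readCount Δ s x q b t ≤ visitCount Δ s x (Δ q b) (t + 1) := by
  rw [visitCount, Nat.count_succ']
  refine (Nat.count_mono_left fun i _ hi => ?_).trans (Nat.le_add_right _ _)
  show Δ (autoRun Δ s x i) (x i) = Δ q b
  rw [hi.1, hi.2]

lemma visitCount_le_cars (B : Finset Q) {q : Q} (hq : q ∈ B) (t : ℕ) :
    visitCount Δ s x q t ≤ cars (fun t => decide (autoRun Δ s x t ∈ B)) t := by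
  rw [cars_eq_count]
  exact Nat.count_mono_left fun i _ hi => by simpa [hi] using hq

lemma exists_visitCount_ge [Fintype Q] [Nonempty Q] (t : ℕ) :
    ∃ q, (t : ℝ) / Fintype.card Q ≤ visitCount Δ s x q t := by
  have hk : (Fintype.card Q : ℝ) ≠ 0 := by exact_mod_cast Fintype.card_ne_zero
  obtain ⟨q, -, hq⟩ := Finset.exists_le_card_fiber_of_nsmul_le_card_of_maps_to
    (s := Finset.range t) (f := autoRun Δ s x) (b := (t : ℝ) / Fintype.card Q)
    (fun _ _ => Finset.mem_univ _) Finset.univ_nonempty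
    (by rw [Finset.card_univ, nsmul_eq_mul, Finset.card_range, mul_div_cancel₀ _ hk])
  exact ⟨q, by rwa [visitCount, Nat.count_eq_card_filter_range]⟩

lemma visitCount_foldl_ge {δ C : ℝ} (hδ0 : 0 ≤ δ) (hδ1 : δ ≤ 1) (hC : 0 ≤ C)
    (H : ∀ q b t, δ * visitCount Δ s x q t - C ≤ readCount Δ s x q b t)
    (l : List Bool) (q : Q) (t : ℕ) :
    δ ^ l.length * visitCount Δ s x q t - l.length * C
      ≤ visitCount Δ s x (l.foldl Δ q) (t + l.length) := by
  induction l generalizing q t with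
  | nil => simp
  | cons b l ih =>
    have hstep : δ * visitCount Δ s x q t - C ≤ visitCount Δ s x (Δ q b) (t + 1) :=
      (H q b t).trans (by exact_mod_cast readCount_le_visitCount_succ Δ s x q b t)
    have hpow : δ ^ l.length ≤ 1 := pow_le_one₀ hδ0 hδ1
    rw [List.foldl_cons, List.length_cons, ← add_assoc, add_right_comm]
    push_cast
    calc δ ^ (l.length + 1) * visitCount Δ s x q t - (l.length + 1) * C
        ≤ δ ^ l.length * (δ * visitCount Δ s x q t - C) - l.length * C := by
          rw [pow_succ]; nlinarith [mul_le_mul_of_nonneg_right hpow hC]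
      _ ≤ δ ^ l.length * visitCount Δ s x (Δ q b) (t + 1) - l.length * C := by gcongr
      _ ≤ _ := ih (Δ q b) (t + 1)

lemma exists_affine_lower_bound_readCount (q : Q)
    (hq : {t | autoRun Δ s x t = q}.Infinite →
      ¬ weaklySparse (subseqAt Δ s x q) ∧ ¬ weaklySparse (fun i => !subseqAt Δ s x q i)) :
    ∃ δ > 0, ∃ C : ℝ, ∀ t, δ * visitCount Δ s x q t - C
      ≤ min (readCount Δ s x q true t : ℝ) (readCount Δ s x q false t) := by
  by_cases hinf : {t | autoRun Δ s x t = q}.Infinite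
  · obtain ⟨δ₁, hδ₁, C₁, h₁⟩ := not_weaklySparse_iff.1 (hq hinf).1
    obtain ⟨δ₂, hδ₂, C₂, h₂⟩ := not_weaklySparse_iff.1 (hq hinf).2
    obtain ⟨C, hC⟩ := exists_forall_affine_le_of_eventually
      (f := fun m =>
        min (cars (subseqAt Δ s x q) m : ℝ) (cars (fun i => !subseqAt Δ s x q i) m))
      (fun m => le_min (Nat.cast_nonneg _) (Nat.cast_nonneg _)) (le_min hδ₁.le hδ₂.le)
      (C := max C₁ C₂) <| by
        filter_upwards [h₁, h₂] with m hm₁ hm₂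
        have hm : (0 : ℝ) ≤ m := m.cast_nonneg
        have hδ₁m := mul_le_mul_of_nonneg_right (min_le_left δ₁ δ₂) hm
        have hδ₂m := mul_le_mul_of_nonneg_right (min_le_right δ₁ δ₂) hm
        exact le_min (by linarith [le_max_left C₁ C₂]) (by linarith [le_max_right C₁ C₂])
    refine ⟨min δ₁ δ₂, lt_min hδ₁ hδ₂, C, fun t => ?_⟩
    simpa only [cars_subseqAt, cars_not_subseqAt] using hC (visitCount Δ s x q t)
  · have hfin := Set.not_infinite.1 hinf
    refine ⟨1, one_pos, hfin.toFinset.card, fun t => ?_⟩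
    have : visitCount Δ s x q t ≤ hfin.toFinset.card := Nat.count_le_card hfin t
    have : (visitCount Δ s x q t : ℝ) ≤ hfin.toFinset.card := by exact_mod_cast this
    exact (by linarith : _ ≤ (0 : ℝ)).trans (le_min (Nat.cast_nonneg _) (Nat.cast_nonneg _))

lemma affine_le_cars_of_readCount_bound [Fintype Q] [Nonempty Q] (B : Finset Q) {δ C : ℝ}
    (hδ0 : 0 ≤ δ) (hδ1 : δ ≤ 1) (hC : 0 ≤ C)
    (H : ∀ q b t, δ * visitCount Δ s x q t - C ≤ readCount Δ s x q b t) {L : ℕ}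
    (hreach : ∀ q : Q, (∃ l : List Bool, l.foldl Δ s = q) →
      ∃ l : List Bool, l.length ≤ L ∧ l.foldl Δ q ∈ B) (t : ℕ) :
    δ ^ L / Fintype.card Q * t - L * C
      ≤ cars (fun t => decide (autoRun Δ s x t ∈ B)) (t + L) := by
  obtain ⟨q, hq⟩ := exists_visitCount_ge Δ s x t
  rcases Nat.eq_zero_or_pos (visitCount Δ s x q t) with h0 | hpos
  · rw [h0, Nat.cast_zero] at hq
    have : δ ^ L / Fintype.card Q * t ≤ 0 := by
      rw [div_mul_eq_mul_div, mul_div_assoc]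
      exact mul_nonpos_of_nonneg_of_nonpos (by positivity) hq
    linarith [mul_nonneg (Nat.cast_nonneg (α := ℝ) L) hC, Nat.cast_nonneg (α := ℝ)
      (cars (fun t => decide (autoRun Δ s x t ∈ B)) (t + L))]
  · obtain ⟨i, -, hi⟩ := Nat.count_ne_iff_exists.1 hpos.ne'
    obtain ⟨l, hlL, hlB⟩ := hreach q ⟨_, (autoRun_eq_foldl Δ s x i).symm.trans hi⟩
    calc δ ^ L / Fintype.card Q * t - L * C
        ≤ δ ^ l.length * visitCount Δ s x q t - l.length * C := by
          rw [div_mul_eq_mul_div, mul_div_assoc]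
          have hpow := mul_le_mul (pow_le_pow_of_le_one hδ0 hδ1 hlL) hq
            (by positivity) (by positivity)
          have hlen : (l.length : ℝ) * C ≤ L * C := by gcongr
          linarith
      _ ≤ visitCount Δ s x (l.foldl Δ q) (t + l.length) :=
          visitCount_foldl_ge Δ s x hδ0 hδ1 hC H l q t
      _ ≤ cars (fun t => decide (autoRun Δ s x t ∈ B)) (t + l.length) := by
          exact_mod_cast visitCount_le_cars Δ s x B hlB _
      _ ≤ cars (fun t => decide (autoRun Δ s x t ∈ B)) (t + L) := by
          exact_mod_cast cars_mono _ (by omega)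

end visitCount

/-- Lemma 4.3: if `B` is strongly accessible and `V_B(x)` is weakly sparse, then there is
a state `q` visited infinitely often on `x` such that `x^{(q)}` is weakly sparse or
co-weakly sparse. -/
theorem exists_sparse_subsequence {Q : Type} [Fintype Q] [DecidableEq Q]
    (s : Q) (Δ : Q → Bool → Q) (B : Finset Q)
    (hsa : ∀ q : Q, (∃ l : List Bool, l.foldl Δ s = q) →
      ∃ l : List Bool, l.foldl Δ q ∈ B)
    (x : ℕ → Bool)
    (hx : weaklySparse (fun t => decide (autoRun Δ s x t ∈ B))) :
    ∃ q : Q, {t : ℕ | autoRun Δ s x t = q}.Infinite ∧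
      (weaklySparse (subseqAt Δ s x q) ∨ weaklySparse (fun i => !subseqAt Δ s x q i)) := by
  by_contra! hcon
  have : Nonempty Q := ⟨s⟩
  obtain ⟨δ, hδ0, hδ1, C, hC, hbound⟩ := exists_uniform_affine_lower_bound
    (f := fun q t => (visitCount Δ s x q t : ℝ)) (fun _ _ => Nat.cast_nonneg _)
    fun q => exists_affine_lower_bound_readCount Δ s x q (hcon q)
  have H : ∀ q b t, δ * visitCount Δ s x q t - C ≤ readCount Δ s x q b t := fun q b t =>
    (hbound q t).trans (by cases b <;> simp)
  obtain ⟨L, hL⟩ := exists_uniform_length_bound hsa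
  refine not_weaklySparse_iff.2
    ⟨δ ^ L / Fintype.card Q, by positivity, δ ^ L / Fintype.card Q * L + L * C, ?_⟩ hx
  filter_upwards [eventually_ge_atTop L] with T hT
  obtain ⟨t, rfl⟩ := Nat.exists_eq_add_of_le' hT
  have := affine_le_cars_of_readCount_bound Δ s x B hδ0.le hδ1 hC H hL t
  push_cast
  linarith
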